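/- arXiv:math/0407023 — 3 statements merged into one kernel-verified Lean document; each statement's English description precedes it below -/
import Mathlib

section
/- Let F : C^n → C be holomorphic with F(0) = 0 and DF(0) ≠ 0, and let ν ∈ C^n be a unit vector not in the kernel of DF(0). Suppose F vanishes identically on the complex hyperplane through 0 complex-orthogonal to ν. Let P be a C¹ map with P(0) = 0 whose image lies in the complex line C·ν and such that w - P(w) is complex-orthogonal to ν to first order. Then for ε > 0, the function w ↦ |F(w)|² + ε |w - P(w)|² has positive definite real Hessian at 0. -/
open Metric
open scoped ComplexInnerProductSpace

open Asymptotics ContinuousLinearMap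

lemma aux_normSq_deriv2
    {E F' : Type*} [NormedAddCommGroup E] [InnerProductSpace ℝ E]
    [NormedAddCommGroup F'] [InnerProductSpace ℝ F']
    {g : E → F'} (hg : Differentiable ℝ g) (hg0 : g 0 = 0)
    (hc : ContinuousAt (fderiv ℝ g) 0) :
    HasFDerivAt (fderiv ℝ fun w => ‖g w‖ ^ 2)
      ((2:ℝ) • (((ContinuousLinearMap.compL ℝ E F' ℝ).flip (fderiv ℝ g 0)).comp
        ((innerSL ℝ).comp (fderiv ℝ g 0)))) 0 := by
  set N := fderiv ℝ g 0 with hN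
  set D := fderiv ℝ g with hD
  have hfd : (fderiv ℝ fun w => ‖g w‖ ^ 2)
      = fun w => (2:ℝ) • ((innerSL ℝ (g w)).comp (D w)) := by
    funext w
    have := ((hg w).hasFDerivAt.norm_sq).fderiv
    rw [this]
    ext u
    simp [two_smul, hD]
  rw [hfd]
  rw [hasFDerivAt_iff_isLittleO_nhds_zero]
  have h1 : (fun h : E => g h - N h) =o[nhds 0] (fun h : E => h) := by
    have := hasFDerivAt_iff_isLittleO_nhds_zero.mp (hg 0).hasFDerivAt
    simpa [hg0] using this
  have h2 : (fun h : E => D h) =O[nhds 0] (fun _ : E => (1:ℝ)) := hc.isBigO_one ℝ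
  have hX : (fun h : E => ((innerSL ℝ (g h - N h)).comp (D h) : E →L[ℝ] ℝ))
      =o[nhds 0] (fun h : E => h) := by
    have hb : ∀ h : E, ‖((innerSL ℝ (g h - N h)).comp (D h) : E →L[ℝ] ℝ)‖
        ≤ ‖‖g h - N h‖ * ‖D h‖‖ := by
      intro h
      rw [Real.norm_of_nonneg (by positivity)]
      calc ‖((innerSL ℝ (g h - N h)).comp (D h) : E →L[ℝ] ℝ)‖
          ≤ ‖innerSL ℝ (g h - N h)‖ * ‖D h‖ := opNorm_comp_le _ _
        _ = ‖g h - N h‖ * ‖D h‖ := by rw [innerSL_apply_norm]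
    have hmid : (fun h : E => ‖g h - N h‖ * ‖D h‖) =o[nhds 0]
        (fun h : E => ‖h‖ * ‖(1:ℝ)‖) := h1.norm_norm.mul_isBigO h2.norm_norm
    simp only [norm_one, mul_one] at hmid
    exact ((isBigO_of_le (nhds 0) hb).trans_isLittleO hmid).of_norm_right
  have h3 : (fun h : E => N h) =O[nhds 0] (fun h : E => h) := N.isBigO_id _
  have h4 : (fun h : E => D h - N) =o[nhds 0] (fun _ : E => (1:ℝ)) := by
    rw [isLittleO_one_iff]
    have : Filter.Tendsto D (nhds 0) (nhds N) := hc
    simpa using this.sub_const N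
  have hY : (fun h : E => ((innerSL ℝ (N h)).comp (D h - N) : E →L[ℝ] ℝ))
      =o[nhds 0] (fun h : E => h) := by
    have hb : ∀ h : E, ‖((innerSL ℝ (N h)).comp (D h - N) : E →L[ℝ] ℝ)‖
        ≤ ‖‖N h‖ * ‖D h - N‖‖ := by
      intro h
      rw [Real.norm_of_nonneg (by positivity)]
      calc ‖((innerSL ℝ (N h)).comp (D h - N) : E →L[ℝ] ℝ)‖
          ≤ ‖innerSL ℝ (N h)‖ * ‖D h - N‖ := opNorm_comp_le _ _
        _ = ‖N h‖ * ‖D h - N‖ := by rw [innerSL_apply_norm]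
    have hmid : (fun h : E => ‖N h‖ * ‖D h - N‖) =o[nhds 0]
        (fun h : E => ‖h‖ * ‖(1:ℝ)‖) := h3.norm_norm.mul_isLittleO h4.norm_norm
    simp only [norm_one, mul_one] at hmid
    exact ((isBigO_of_le (nhds 0) hb).trans_isLittleO hmid).of_norm_right
  have hsum := (hX.add hY).const_smul_left (2:ℝ)
  refine hsum.congr' ?_ (by rfl)
  filter_upwards with h
  ext u
  simp [hg0, inner_sub_left, inner_sub_right, two_smul, map_sub, sub_apply,
    ContinuousLinearMap.comp_apply, smul_apply, flip_apply, compL_apply]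
  ring

open Metric

lemma aux_fderiv_cont {n : ℕ} {F : EuclideanSpace ℂ (Fin n) → ℂ}
    (hF : Differentiable ℂ F) : ContinuousAt (fderiv ℝ F) 0 := by
  rw [Metric.continuousAt_iff]
  intro ε hε
  -- uniform continuity on closed ball of radius 2
  have hcpt : IsCompact (closedBall (0 : EuclideanSpace ℂ (Fin n)) 2) :=
    isCompact_closedBall _ _
  have hUC : UniformContinuousOn F (closedBall (0 : EuclideanSpace ℂ (Fin n)) 2) :=
    hcpt.uniformContinuousOn_of_continuous (hF.continuous.continuousOn)
  rw [Metric.uniformContinuousOn_iff] at hUC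
  obtain ⟨δ0, hδ0, hδ⟩ := hUC (ε / 2) (by positivity)
  refine ⟨min δ0 1, by positivity, ?_⟩
  intro w hw
  simp only [dist_zero_right] at hw
  have hw1 : ‖w‖ ≤ 1 := le_of_lt (lt_of_lt_of_le hw (min_le_right _ _))
  have hwδ : ‖w‖ < δ0 := lt_of_lt_of_le hw (min_le_left _ _)
  rw [dist_eq_norm]
  -- key pointwise bound on unit vectors
  have key : ∀ u : EuclideanSpace ℂ (Fin n), ‖u‖ = 1 →
      ‖fderiv ℂ F w u - fderiv ℂ F 0 u‖ ≤ ε / 2 := by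
    intro u hu
    set g : ℂ → ℂ := fun z => F (w + z • u) - F (z • u) with hg
    have hgd : Differentiable ℂ g := by
      have h1 : Differentiable ℂ (fun z : ℂ => w + z • u) :=
        (differentiable_id.smul_const u).const_add w
      have h2 : Differentiable ℂ (fun z : ℂ => z • u) := differentiable_id.smul_const u
      exact (hF.comp h1).sub (hF.comp h2)
    have hline1 : HasDerivAt (fun z : ℂ => w + z • u) u 0 := by
      simpa using ((hasDerivAt_id (0 : ℂ)).smul_const u).const_add w
    have hline2 : HasDerivAt (fun z : ℂ => z • u) u 0 := by
      simpa using (hasDerivAt_id (0 : ℂ)).smul_const u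
    have hA : HasDerivAt (fun z : ℂ => F (w + z • u)) (fderiv ℂ F w u) 0 := by
      have h0 : HasFDerivAt F (fderiv ℂ F w) (w + (0 : ℂ) • u) := by
        rw [zero_smul, add_zero]; exact (hF w).hasFDerivAt
      exact h0.comp_hasDerivAt 0 hline1
    have hB : HasDerivAt (fun z : ℂ => F (z • u)) (fderiv ℂ F 0 u) 0 := by
      have h0 : HasFDerivAt F (fderiv ℂ F 0) ((0 : ℂ) • u) := by
        rw [zero_smul]; exact (hF 0).hasFDerivAt
      exact h0.comp_hasDerivAt 0 hline2
    have hgder : deriv g 0 = fderiv ℂ F w u - fderiv ℂ F 0 u := (hA.sub hB).deriv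
    have hbound : ∀ z ∈ sphere (0 : ℂ) 1, ‖g z‖ ≤ ε / 2 := by
      intro z hz
      have hz1 : ‖z‖ = 1 := by simpa using hz
      have hzu : ‖z • u‖ = 1 := by rw [norm_smul, hz1, hu, one_mul]
      have hm1 : z • u ∈ closedBall (0 : EuclideanSpace ℂ (Fin n)) 2 := by
        simp only [mem_closedBall, dist_zero_right, hzu]; norm_num
      have hm2 : w + z • u ∈ closedBall (0 : EuclideanSpace ℂ (Fin n)) 2 := by
        simp only [mem_closedBall, dist_zero_right]
        calc ‖w + z • u‖ ≤ ‖w‖ + ‖z • u‖ := norm_add_le _ _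
          _ ≤ 1 + 1 := by rw [hzu]; linarith
          _ = 2 := by norm_num
      have hdist : dist (w + z • u) (z • u) < δ0 := by
        rw [dist_eq_norm]; simpa using hwδ
      exact le_of_lt (by show ‖F (w + z • u) - F (z • u)‖ < ε / 2; rw [← dist_eq_norm]; exact hδ _ hm2 _ hm1 hdist)
    have := Complex.norm_deriv_le_of_forall_mem_sphere_norm_le zero_lt_one
      (hgd.diffContOnCl) hbound
    rw [hgder] at this
    simpa using this
  -- conclude operator norm bound
  have hres : ∀ x : EuclideanSpace ℂ (Fin n), DifferentiableAt ℂ F x →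
      fderiv ℝ F x = (fderiv ℂ F x).restrictScalars ℝ := fun x hx =>
    hx.fderiv_restrictScalars ℝ
  have hopb : ‖fderiv ℝ F w - fderiv ℝ F 0‖ ≤ ε / 2 := by
    apply ContinuousLinearMap.opNorm_le_of_unit_norm (by positivity)
    intro u hu
    rw [hres w (hF w), hres 0 (hF 0)]
    exact key u hu
  linarith


set_option maxHeartbeats 1000000 in
/-- If `F` is holomorphic, vanishing on the complex hyperplane through `0` orthogonal to `ν`
(`ν` not in the kernel of `DF(0)`), and `P` is a `C¹` map into the complex line `ℂ·ν` with
`P(0)=0` such that `w - P(w)` is complex-orthogonal to `ν` to first order, then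
`w ↦ |F(w)|² + ε|w - P(w)|²` has positive definite real Hessian at `0`. -/
theorem stmt4 {n : ℕ} (F : EuclideanSpace ℂ (Fin n) → ℂ)
    (hF : Differentiable ℂ F) (hF0 : F 0 = 0) (hDF0 : fderiv ℂ F 0 ≠ 0)
    (ν : EuclideanSpace ℂ (Fin n)) (hν : ‖ν‖ = 1) (hνker : fderiv ℂ F 0 ν ≠ 0)
    (hvanish : ∀ w : EuclideanSpace ℂ (Fin n), ⟪w, ν⟫ = 0 → F w = 0)
    (P : EuclideanSpace ℂ (Fin n) → EuclideanSpace ℂ (Fin n))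
    (hP : ContDiff ℝ 1 P) (hP0 : P 0 = 0)
    (hPline : ∀ w, ∃ c : ℂ, P w = c • ν)
    (hPorth : ∀ u, ⟪u - fderiv ℝ P 0 u, ν⟫ = 0)
    (ε : ℝ) (hε : 0 < ε) :
    ∀ v : EuclideanSpace ℂ (Fin n), v ≠ 0 →
      0 < iteratedFDeriv ℝ 2 (fun w => ‖F w‖ ^ 2 + ε * ‖w - P w‖ ^ 2) 0 ![v, v] := by
  intro v hv
  set G : EuclideanSpace ℂ (Fin n) → EuclideanSpace ℂ (Fin n) := fun w => w - P w with hGdef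
  -- F data
  have hFR : Differentiable ℝ F := hF.restrictScalars ℝ
  have hFcont : ContinuousAt (fderiv ℝ F) 0 := aux_fderiv_cont hF
  -- G data
  have hGc : ContDiff ℝ 1 G := contDiff_id.sub hP
  have hGR : Differentiable ℝ G := hGc.differentiable one_ne_zero
  have hG0 : G 0 = 0 := by simp [hGdef, hP0]
  have hGcont : ContinuousAt (fderiv ℝ G) 0 := (hGc.continuous_fderiv one_ne_zero).continuousAt
  have hd1 : HasFDerivAt (fderiv ℝ fun w : EuclideanSpace ℂ (Fin n) => ‖F w‖ ^ 2)
      ((2:ℝ) • (((ContinuousLinearMap.compL ℝ (EuclideanSpace ℂ (Fin n)) ℂ ℝ).flip (fderiv ℝ F 0)).comp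
        ((innerSL ℝ).comp (fderiv ℝ F 0)))) 0 := aux_normSq_deriv2 hFR hF0 hFcont
  have hd2 : HasFDerivAt (fderiv ℝ fun w : EuclideanSpace ℂ (Fin n) => ‖G w‖ ^ 2)
      ((2:ℝ) • (((ContinuousLinearMap.compL ℝ (EuclideanSpace ℂ (Fin n)) (EuclideanSpace ℂ (Fin n)) ℝ).flip (fderiv ℝ G 0)).comp
        ((innerSL ℝ).comp (fderiv ℝ G 0)))) 0 := aux_normSq_deriv2 hGR hG0 hGcont
  set B₁ := (2:ℝ) • (((ContinuousLinearMap.compL ℝ (EuclideanSpace ℂ (Fin n)) ℂ ℝ).flip (fderiv ℝ F 0)).comp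
        ((innerSL ℝ).comp (fderiv ℝ F 0))) with hB₁
  set B₂ := (2:ℝ) • (((ContinuousLinearMap.compL ℝ (EuclideanSpace ℂ (Fin n)) (EuclideanSpace ℂ (Fin n)) ℝ).flip (fderiv ℝ G 0)).comp
        ((innerSL ℝ).comp (fderiv ℝ G 0))) with hB₂
  -- derivative of the sum
  have hφd : (fderiv ℝ fun w : EuclideanSpace ℂ (Fin n) => ‖F w‖ ^ 2 + ε * ‖w - P w‖ ^ 2)
      = fun w => fderiv ℝ (fun x : EuclideanSpace ℂ (Fin n) => ‖F x‖ ^ 2) w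
          + ε • fderiv ℝ (fun x : EuclideanSpace ℂ (Fin n) => ‖G x‖ ^ 2) w := by
    funext w
    have d1 : DifferentiableAt ℝ (fun x : EuclideanSpace ℂ (Fin n) => ‖F x‖ ^ 2) w := (hFR w).norm_sq ℂ
    have d2 : DifferentiableAt ℝ (fun x : EuclideanSpace ℂ (Fin n) => ‖G x‖ ^ 2) w := (hGR w).norm_sq ℂ
    have : (fun w : EuclideanSpace ℂ (Fin n) => ‖F w‖ ^ 2 + ε * ‖w - P w‖ ^ 2)
        = fun w : EuclideanSpace ℂ (Fin n) => ‖F w‖ ^ 2 + ε * ‖G w‖ ^ 2 := rfl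
    rw [this, fderiv_fun_add d1 (d2.const_mul ε), fderiv_const_mul d2 ε]
  have hd : HasFDerivAt (fderiv ℝ fun w : EuclideanSpace ℂ (Fin n) => ‖F w‖ ^ 2 + ε * ‖w - P w‖ ^ 2)
      (B₁ + ε • B₂) 0 := by
    rw [hφd]
    exact hd1.add (hd2.const_smul ε)
  have hval : iteratedFDeriv ℝ 2 (fun w : EuclideanSpace ℂ (Fin n) => ‖F w‖ ^ 2 + ε * ‖w - P w‖ ^ 2) 0 ![v, v]
      = 2 * ‖fderiv ℝ F 0 v‖ ^ 2 + ε * (2 * ‖fderiv ℝ G 0 v‖ ^ 2) := by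
    rw [iteratedFDeriv_two_apply, hd.fderiv]
    simp only [Matrix.cons_val_zero, Matrix.cons_val_one, Matrix.head_cons,
      ContinuousLinearMap.add_apply, ContinuousLinearMap.smul_apply, hB₁, hB₂,
      ContinuousLinearMap.comp_apply, ContinuousLinearMap.flip_apply,
      ContinuousLinearMap.compL_apply, smul_eq_mul]
    rw [innerSL_apply_apply, innerSL_apply_apply, real_inner_self_eq_norm_sq, real_inner_self_eq_norm_sq]
  rw [hval]
  -- positivity
  by_cases hL : fderiv ℝ F 0 v = 0
  · -- then fderiv ℝ G 0 v ≠ 0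
    have hM : fderiv ℝ G 0 v ≠ 0 := by
      intro hM0
      -- v = fderiv ℝ P 0 v
      have hdiffP : DifferentiableAt ℝ P 0 := (hP.differentiable one_ne_zero) 0
      have hGder : fderiv ℝ G 0 = ContinuousLinearMap.id ℝ (EuclideanSpace ℂ (Fin n)) - fderiv ℝ P 0 := by
        rw [hGdef]
        rw [fderiv_fun_sub differentiableAt_fun_id hdiffP, fderiv_fun_id]
      have hveq : v = fderiv ℝ P 0 v := by
        have := hM0
        rw [hGder] at this
        simpa [sub_eq_zero] using this
      -- tangent: fderiv ℝ P 0 v ∈ span ℂ {ν}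
      set S : Submodule ℂ (EuclideanSpace ℂ (Fin n)) := Submodule.span ℂ {ν} with hS
      have hSc : IsClosed (S : Set (EuclideanSpace ℂ (Fin n))) := S.closed_of_finiteDimensional
      have hline : HasDerivAt (fun t : ℝ => t • v) v 0 := by
        simpa using (hasDerivAt_id (0:ℝ)).smul_const v
      have hcomp : HasDerivAt (fun t : ℝ => P (t • v)) (fderiv ℝ P 0 v) 0 := by
        have h0 : HasFDerivAt P (fderiv ℝ P 0) ((0:ℝ) • v) := by
          rw [zero_smul]; exact hdiffP.hasFDerivAt
        exact h0.comp_hasDerivAt 0 hline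
      have hmem : fderiv ℝ P 0 v ∈ S := by
        rw [hasDerivAt_iff_tendsto_slope] at hcomp
        refine hSc.mem_of_tendsto hcomp ?_
        filter_upwards with t
        rw [slope_def_module]
        have hPt : P (t • v) ∈ S := by
          obtain ⟨c, hc⟩ := hPline (t • v)
          rw [hc]
          exact S.smul_mem c (Submodule.mem_span_singleton_self ν)
        have hP0S : P ((0:ℝ) • v) ∈ S := by
          rw [zero_smul, hP0]; exact S.zero_mem
        exact S.smul_of_tower_mem _ (S.sub_mem hPt hP0S)
      have hvS : v ∈ S := hveq ▸ hmem
      obtain ⟨c, hc⟩ := Submodule.mem_span_singleton.mp hvS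
      -- fderiv ℝ F 0 v = fderiv ℂ F 0 v
      have hres : fderiv ℝ F 0 v = fderiv ℂ F 0 v := by
        rw [(hF 0).fderiv_restrictScalars ℝ]
        rfl
      have : fderiv ℂ F 0 v = 0 := by rw [← hres, hL]
      rw [← hc, map_smul] at this
      rcases smul_eq_zero.mp this with h | h
      · exact hv (by rw [← hc, h, zero_smul])
      · exact hνker h
    have h1 : 0 < ε * (2 * ‖fderiv ℝ G 0 v‖ ^ 2) := by
      have : 0 < ‖fderiv ℝ G 0 v‖ := norm_pos_iff.mpr hM
      positivity
    nlinarith [sq_nonneg ‖fderiv ℝ F 0 v‖]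
  · have h1 : 0 < 2 * ‖fderiv ℝ F 0 v‖ ^ 2 := by
      have : 0 < ‖fderiv ℝ F 0 v‖ := norm_pos_iff.mpr hL
      positivity
    nlinarith [sq_nonneg ‖fderiv ℝ G 0 v‖, hε.le]
end

section
/- A bounded open set Ω ⊂ C^n that is completely circled about the origin (i.e., w ∈ Ω and |λ| ≤ 1, λ ∈ C, implies λw ∈ Ω) and hypoconvex (its complement is a union of complex hyperplanes of complex dimension n-1) is convex, provided it is additionally assumed that for every boundary point p there is a complex hyperplane through p missing Ω. -/
/-!
If a complex hyperplane `φ = φ p` misses a balanced set `s`, then `‖φ‖ < ‖φ p‖` on `s`: otherwise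
some `w ∈ s` with `‖φ w‖ ≥ ‖φ p‖` could be shrunk by the scalar `φ p / φ w` onto the hyperplane.
The slabs `{w | ‖φ w‖ < r}` are convex, so a convex combination of points of `s` lying outside `s`
would satisfy `‖φ p‖ < ‖φ p‖` for its own separating functional.
-/

section

variable {𝕜 E : Type*} [RCLike 𝕜] [AddCommGroup E] [Module 𝕜 E] {s : Set E}

theorem Balanced.norm_apply_lt_of_forall_apply_ne (hs : Balanced 𝕜 s) {φ : E →ₗ[𝕜] 𝕜} {c : 𝕜}
    (hc : ∀ w ∈ s, φ w ≠ c) {w : E} (hw : w ∈ s) : ‖φ w‖ < ‖c‖ := by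
  have hc0 : c ≠ 0 := by simpa using (hc 0 (hs.zero_mem ⟨w, hw⟩)).symm
  by_contra! hle
  have hφw : φ w ≠ 0 := by
    rintro h
    simp [h, hc0] at hle
  have hscale : ‖c / φ w‖ ≤ 1 := by
    rw [norm_div]
    exact div_le_one_of_le₀ hle (norm_nonneg _)
  exact hc _ (hs.smul_mem hscale hw) (by rw [map_smul, smul_eq_mul, div_mul_cancel₀ _ hφw])

variable [Module ℝ E] [IsScalarTower ℝ 𝕜 E]

theorem convex_setOf_norm_apply_lt (φ : E →ₗ[𝕜] 𝕜) (r : ℝ) : Convex ℝ {w | ‖φ w‖ < r} := by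
  simpa [Set.preimage, Metric.ball] using
    (convex_ball (0 : 𝕜) r).linear_preimage (φ.restrictScalars ℝ)

theorem Balanced.convex_of_forall_notMem_exists_linearMap (hs : Balanced 𝕜 s)
    (hsep : ∀ p ∉ s, ∃ φ : E →ₗ[𝕜] 𝕜, ∀ w ∈ s, φ w ≠ φ p) : Convex ℝ s := by
  intro x hx y hy a b ha hb hab
  by_contra hz
  obtain ⟨φ, hφ⟩ := hsep _ hz
  have : ‖φ (a • x + b • y)‖ < ‖φ (a • x + b • y)‖ :=
    convex_setOf_norm_apply_lt φ _ (hs.norm_apply_lt_of_forall_apply_ne hφ hx)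
      (hs.norm_apply_lt_of_forall_apply_ne hφ hy) ha hb hab
  exact lt_irrefl _ this

end

theorem stmt6_general {n : ℕ} (Ω : Set (EuclideanSpace ℂ (Fin n)))
    (hcircled : ∀ w ∈ Ω, ∀ l : ℂ, ‖l‖ ≤ 1 → l • w ∈ Ω)
    (hhypo : ∀ p ∉ Ω, ∃ φ : EuclideanSpace ℂ (Fin n) →ₗ[ℂ] ℂ,
      φ ≠ 0 ∧ ∀ w ∈ Ω, φ w ≠ φ p) :
    Convex ℝ Ω := by
  have hbalanced : Balanced ℂ Ω :=
    balanced_iff_smul_mem.mpr fun l hl w hw => hcircled w hw l hl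
  refine hbalanced.convex_of_forall_notMem_exists_linearMap fun p hp => ?_
  obtain ⟨φ, -, hφ⟩ := hhypo p hp
  exact ⟨φ, hφ⟩

/-- A bounded open subset of `ℂⁿ` that is completely circled about the origin and hypoconvex
(its complement is a union of affine complex hyperplanes), such that moreover every boundary
point lies on a complex hyperplane missing the set, is convex. -/
theorem stmt6 {n : ℕ} (Ω : Set (EuclideanSpace ℂ (Fin n)))
    (hopen : IsOpen Ω) (hbdd : Bornology.IsBounded Ω)
    (hcircled : ∀ w ∈ Ω, ∀ l : ℂ, ‖l‖ ≤ 1 → l • w ∈ Ω)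
    (hhypo : ∀ p ∉ Ω, ∃ φ : EuclideanSpace ℂ (Fin n) →ₗ[ℂ] ℂ,
      φ ≠ 0 ∧ ∀ w ∈ Ω, φ w ≠ φ p)
    (hbdry : ∀ p ∈ frontier Ω, ∃ φ : EuclideanSpace ℂ (Fin n) →ₗ[ℂ] ℂ,
      φ ≠ 0 ∧ ∀ w ∈ Ω, φ w ≠ φ p) :
    Convex ℝ Ω :=
  stmt6_general Ω hcircled hhypo
end

section
/- Let K ⊂ Γ × C^n be compact, where Γ is the unit circle, and suppose each fiber K_z = {w : (z,w) ∈ K} is polynomially convex in C^n. Then the fiber over z ∈ Γ of the polynomial hull of K equals the polynomial hull of K_z: (K̂)_z = (K_z)^ for z ∈ Γ. -/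
/-!
The inclusion `(K_z)^ ⊆ (K̂)_z` holds for every `K`: restricting a polynomial to the slice
`{z} × ℂⁿ` gives a polynomial in `w`. For the converse, `L = (1 + z̄ ζ)/2` is a polynomial with
`|L| ≤ 1` on `K` and `|L| = 1` exactly on the fiber over `z`. If `|Q| < B` on that fiber, then
`|L| ≤ δ < 1` on the compact part of `K` where `|Q| ≥ B`, so `|Q L^k| ≤ B` on all of `K` for
large `k`; at a hull point over `z`, where `L = 1`, this reads `|Q| ≤ B`.
-/

/-- The polynomial hull of a compact set `Y ⊆ ℂ^N`. -/
def polyHull {N : ℕ} (Y : Set (Fin N → ℂ)) : Set (Fin N → ℂ) :=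
  {x | ∀ P : MvPolynomial (Fin N) ℂ, ∀ M : ℝ,
    (∀ y ∈ Y, ‖MvPolynomial.eval y P‖ ≤ M) → ‖MvPolynomial.eval x P‖ ≤ M}

open MvPolynomial ComplexConjugate

lemma IsCompact.exists_lt_forall_le {X : Type*} [TopologicalSpace X] {S : Set X}
    (hS : IsCompact S) {f : X → ℝ} (hf : ContinuousOn f S) {c : ℝ} (hfc : ∀ x ∈ S, f x < c) :
    ∃ δ < c, ∀ x ∈ S, f x ≤ δ := by
  rcases S.eq_empty_or_nonempty with rfl | hne
  · exact ⟨c - 1, by linarith, by simp⟩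
  · obtain ⟨x₀, hx₀, hmax⟩ := hS.exists_isMaxOn hne hf
    exact ⟨f x₀, hfc x₀ hx₀, hmax⟩

lemma Complex.eq_one_of_norm_add_one_eq_two {w : ℂ} (hw : ‖w‖ = 1) (h : ‖1 + w‖ = 2) :
    w = 1 := by
  have := (norm_add_eq_iff_real (F := ℂ) (x := 1) (y := w)).1 (by rw [h, hw, norm_one]; norm_num)
  simpa [hw] using this.symm

theorem norm_eval_le_of_mem_polyHull_of_peak {N : ℕ} {K : Set (Fin N → ℂ)} (hK : IsCompact K)
    {p : Fin N → ℂ} (hp : p ∈ polyHull K) {L : MvPolynomial (Fin N) ℂ}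
    (hL : ∀ x ∈ K, ‖eval x L‖ ≤ 1) (hLp : eval p L = 1) {Q : MvPolynomial (Fin N) ℂ} {B : ℝ}
    (hB : 0 < B) (hQ : ∀ x ∈ K, ‖eval x L‖ = 1 → ‖eval x Q‖ < B) :
    ‖eval p Q‖ ≤ B := by
  set S := K ∩ {x | B ≤ ‖eval x Q‖}
  have hS : IsCompact S := hK.inter_right (isClosed_le continuous_const Q.continuous_eval.norm)
  obtain ⟨δ, hδ1, hLδ⟩ := hS.exists_lt_forall_le L.continuous_eval.norm.continuousOn
    fun x ⟨hxK, hxQ⟩ => (hL x hxK).lt_of_ne fun h => (hQ x hxK h).not_ge hxQ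
  obtain ⟨C, hC⟩ := hK.exists_bound_of_continuousOn Q.continuous_eval.continuousOn
  obtain ⟨k, hk⟩ := (((tendsto_pow_atTop_nhds_zero_of_lt_one (le_max_right δ 0)
    (max_lt hδ1 one_pos)).const_mul C).eventually (gt_mem_nhds (by simpa using hB))).exists
  simpa [hLp] using hp (Q * L ^ k) B fun x hx => by
    rw [map_mul, map_pow, norm_mul, norm_pow]
    by_cases hxQ : B ≤ ‖eval x Q‖
    · calc ‖eval x Q‖ * ‖eval x L‖ ^ k ≤ C * max δ 0 ^ k := by
            gcongr
            · exact (norm_nonneg _).trans (hC x hx)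
            · exact hC x hx
            · exact (hLδ x ⟨hx, hxQ⟩).trans (le_max_left _ _)
        _ ≤ B := hk.le
    · calc ‖eval x Q‖ * ‖eval x L‖ ^ k ≤ B * 1 := by
            gcongr
            · exact (not_le.1 hxQ).le
            · exact pow_le_one₀ (norm_nonneg _) (hL x hx)
        _ = B := mul_one B

section Circle
variable {n : ℕ}

noncomputable def circlePeak (z : ℂ) : MvPolynomial (Fin (n + 1)) ℂ :=
  C 2⁻¹ * (1 + C (conj z) * X 0)

@[simp]
lemma eval_circlePeak (z : ℂ) (x : Fin (n + 1) → ℂ) :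
    eval x (circlePeak z) = 2⁻¹ * (1 + conj z * x 0) := by
  simp [circlePeak]

lemma norm_circlePeak_le_one {z : ℂ} (hz : ‖z‖ = 1) {x : Fin (n + 1) → ℂ} (hx : ‖x 0‖ = 1) :
    ‖eval x (circlePeak z)‖ ≤ 1 := by
  rw [eval_circlePeak, norm_mul]
  calc ‖(2⁻¹ : ℂ)‖ * ‖1 + conj z * x 0‖ ≤ 2⁻¹ * (‖(1 : ℂ)‖ + ‖conj z * x 0‖) := by
        rw [norm_inv, Complex.norm_two]; gcongr; exact norm_add_le _ _
    _ = 1 := by simp [hz, hx]; norm_num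

lemma eq_of_norm_circlePeak_eq_one {z : ℂ} (hz : ‖z‖ = 1) {x : Fin (n + 1) → ℂ}
    (hx : ‖x 0‖ = 1) (h : ‖eval x (circlePeak z)‖ = 1) : x 0 = z := by
  have hzz : z * conj z = 1 := by rw [Complex.mul_conj, Complex.normSq_eq_norm_sq, hz]; norm_num
  have hw : conj z * x 0 = 1 := Complex.eq_one_of_norm_add_one_eq_two (by simp [hz, hx]) <| by
    rw [eval_circlePeak, norm_mul, norm_inv, Complex.norm_two] at h; linarith
  linear_combination z * hw - x 0 * hzz

lemma eval_circlePeak_self {z : ℂ} (hz : ‖z‖ = 1) (w : Fin n → ℂ) :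
    eval (Fin.cons z w : Fin (n + 1) → ℂ) (circlePeak z) = 1 := by
  rw [eval_circlePeak, Fin.cons_zero, ← Complex.normSq_eq_conj_mul_self,
    Complex.normSq_eq_norm_sq, hz]
  norm_num

end Circle

section Fiber
variable {n : ℕ} {K : Set (Fin (n + 1) → ℂ)} {z : ℂ} {w : Fin n → ℂ}

theorem norm_eval_le_of_mem_polyHull_of_lt_on_fiber (hK : IsCompact K)
    (hcirc : ∀ x ∈ K, ‖x 0‖ = 1) (hz : ‖z‖ = 1) (hw : Fin.cons z w ∈ polyHull K)
    {Q : MvPolynomial (Fin (n + 1)) ℂ} {B : ℝ} (hB : 0 < B)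
    (hQ : ∀ v, Fin.cons z v ∈ K → ‖eval (Fin.cons z v : Fin (n + 1) → ℂ) Q‖ < B) :
    ‖eval (Fin.cons z w : Fin (n + 1) → ℂ) Q‖ ≤ B := by
  refine norm_eval_le_of_mem_polyHull_of_peak hK hw
    (fun x hx => norm_circlePeak_le_one hz (hcirc x hx)) (eval_circlePeak_self hz w) hB
    fun x hx hLx => ?_
  have hx0 := eq_of_norm_circlePeak_eq_one hz (hcirc x hx) hLx
  rw [← Fin.cons_self_tail x, hx0] at hx ⊢
  exact hQ _ hx

lemma nonempty_fiber_of_mem_polyHull (hK : IsCompact K) (hcirc : ∀ x ∈ K, ‖x 0‖ = 1)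
    (hz : ‖z‖ = 1) (hw : Fin.cons z w ∈ polyHull K) : ∃ v, Fin.cons z v ∈ K := by
  by_contra! hempty
  have := norm_eval_le_of_mem_polyHull_of_lt_on_fiber hK hcirc hz hw (Q := 1) (B := 2⁻¹)
    (by norm_num) fun v hv => (hempty v hv).elim
  norm_num at this

theorem fiber_polyHull_subset_polyHull_fiber (hK : IsCompact K) (hcirc : ∀ x ∈ K, ‖x 0‖ = 1)
    (hz : ‖z‖ = 1) :
    {w : Fin n → ℂ | Fin.cons z w ∈ polyHull K} ⊆ polyHull {w | Fin.cons z w ∈ K} := by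
  intro w hw P M hPM
  obtain ⟨v, hv⟩ := nonempty_fiber_of_mem_polyHull hK hcirc hz hw
  have hM : 0 ≤ M := (norm_nonneg _).trans (hPM v hv)
  refine le_of_forall_pos_le_add fun ε hε => ?_
  simpa [eval_rename] using norm_eval_le_of_mem_polyHull_of_lt_on_fiber hK hcirc hz hw
    (Q := rename Fin.succ P) (add_pos_of_nonneg_of_pos hM hε) fun v hv => by
      simpa [eval_rename] using (hPM v hv).trans_lt (lt_add_of_pos_right M hε)

lemma eval_bind₁_cons (P : MvPolynomial (Fin (n + 1)) ℂ) :
    eval w (bind₁ (Fin.cons (C z) X) P) = eval (Fin.cons z w : Fin (n + 1) → ℂ) P := by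
  rw [eval, eval₂Hom_bind₁, eval]
  congr 2 with i
  refine Fin.cases ?_ (fun i => ?_) i <;> simp

theorem polyHull_fiber_subset_fiber_polyHull :
    polyHull {w | Fin.cons z w ∈ K} ⊆ {w : Fin n → ℂ | Fin.cons z w ∈ polyHull K} := by
  intro w hw P M hPM
  rw [← eval_bind₁_cons]
  exact hw _ M fun v hv => by rw [eval_bind₁_cons]; exact hPM _ hv

end Fiber

theorem stmt7_general {n : ℕ} (K : Set (Fin (n + 1) → ℂ)) (hK : IsCompact K)
    (hcirc : ∀ x ∈ K, ‖x 0‖ = 1) :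
    ∀ z : ℂ, ‖z‖ = 1 →
      {w : Fin n → ℂ | Fin.cons z w ∈ polyHull K} =
        polyHull {w : Fin n → ℂ | Fin.cons z w ∈ K} := fun _ hz =>
  (fiber_polyHull_subset_polyHull_fiber hK hcirc hz).antisymm
    polyHull_fiber_subset_fiber_polyHull

/-- If `K ⊆ Γ × ℂⁿ` is compact and each fiber `K_z` is polynomially convex, then the fiber of
the polynomial hull of `K` over `z ∈ Γ` is the polynomial hull of the fiber `K_z`. -/
theorem stmt7 {n : ℕ} (K : Set (Fin (n + 1) → ℂ)) (hK : IsCompact K)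
    (hcirc : ∀ x ∈ K, ‖x 0‖ = 1)
    (hfib : ∀ z : ℂ, ‖z‖ = 1 →
      polyHull {w : Fin n → ℂ | Fin.cons z w ∈ K} = {w : Fin n → ℂ | Fin.cons z w ∈ K}) :
    ∀ z : ℂ, ‖z‖ = 1 →
      {w : Fin n → ℂ | Fin.cons z w ∈ polyHull K} =
        polyHull {w : Fin n → ℂ | Fin.cons z w ∈ K} :=
  stmt7_general K hK hcirc
end
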